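/- arXiv:1604.05163 — 2 statements merged into one kernel-verified Lean document; each statement's English description precedes it below -/
import Mathlib

section
/- Let b, c, ν, ρ, s ∈ ℂ with Re(ρ) > 0, Re(c) > 0, Re(ν) > -1, Re(s) > 0 and Re(s) > √|b|. Then the Laplace transform of t ↦ G_ν^{(b,c)}(t;ρ) satisfies ∫_0^∞ e^{-st} G_ν^{(b,c)}(t;ρ) dt = (1/s) · Σ_{k=0}^∞ (-b)^k (c;ρ)_{2k+ν} · (1/(2s))^{2k+ν} / (k! · Γ(ν+k+1)), where (1/(2s))^{2k+ν} is the principal complex power. -/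
open Complex MeasureTheory Real Set

/-- Extended Gamma function `Γ_ρ(x) = ∫_0^∞ t^(x-1) e^(-t-ρ/t) dt`. -/
noncomputable def extGamma (ρ x : ℂ) : ℂ :=
  ∫ t in Ioi (0:ℝ), (t:ℂ) ^ (x - 1) * Complex.exp (-(t:ℂ) - ρ / (t:ℂ))

/-- Generalized Pochhammer symbol `(c;ρ)_μ = Γ_ρ(c+μ)/Γ(c)`. -/
noncomputable def genPoch (c ρ μ : ℂ) : ℂ := extGamma ρ (c + μ) / Complex.Gamma c

/-- Unified four parameter Bessel function `G_ν^{(b,c)}(z;ρ)` with complex order,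
powers being principal complex powers. -/
noncomputable def unifiedG (b c ν ρ z : ℂ) : ℂ :=
  ∑' k : ℕ, (-b) ^ k * genPoch c ρ (2 * (k:ℂ) + ν) * (z / 2) ^ (2 * (k:ℂ) + ν) /
    ((k.factorial : ℂ) * Complex.Gamma (ν + (k:ℂ) + 1) * Complex.Gamma (ν + 2 * (k:ℂ) + 1))

/-- Unified four parameter Bessel function with integer order, powers being integer powers. -/
noncomputable def unifiedGInt (b c ρ : ℂ) (ν : ℤ) (z : ℂ) : ℂ :=
  ∑' k : ℕ, (-b) ^ k * genPoch c ρ (2 * (k:ℂ) + (ν:ℂ)) * (z / 2) ^ (2 * (k:ℤ) + ν) /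
    ((k.factorial : ℂ) * Complex.Gamma ((ν:ℂ) + (k:ℂ) + 1) * Complex.Gamma ((ν:ℂ) + 2 * (k:ℂ) + 1))

/-- Pochhammer symbol `(a)_k = Γ(a+k)/Γ(a)`. -/
noncomputable def poch (a : ℂ) (k : ℕ) : ℂ := Complex.Gamma (a + (k:ℂ)) / Complex.Gamma a

/-- Generalized hypergeometric function `₀F₃`. -/
noncomputable def hyp0F3 (a₁ a₂ a₃ w : ℂ) : ℂ :=
  ∑' k : ℕ, w ^ k / (poch a₁ k * poch a₂ k * poch a₃ k * (k.factorial : ℂ))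

/-- Generalized hypergeometric function `₂F₃`. -/
noncomputable def hyp2F3 (a₁ a₂ b₁ b₂ b₃ w : ℂ) : ℂ :=
  ∑' k : ℕ, poch a₁ k * poch a₂ k * w ^ k /
    (poch b₁ k * poch b₂ k * poch b₃ k * (k.factorial : ℂ))

/-- Bessel function of the first kind `J_μ(z)` for real `z > 0`. -/
noncomputable def besselJ (μ : ℂ) (z : ℝ) : ℂ :=
  ∑' k : ℕ, (-1) ^ k * ((z:ℂ) / 2) ^ (2 * (k:ℂ) + μ) /
    ((k.factorial : ℂ) * Complex.Gamma (μ + (k:ℂ) + 1))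

/-- Generalized four parameter spherical Bessel function
`g_ν^{(b,c)}(z;ρ) = √(π/(2z)) · G_{ν+1/2}^{(b,c-1/2)}(z;ρ)`. -/
noncomputable def sphG (b c ν ρ : ℂ) (z : ℝ) : ℂ :=
  (Real.sqrt (π / (2 * z)) : ℂ) * unifiedG b (c - 1/2) (ν + 1/2) ρ (z:ℂ)

/-- Generalized four parameter Bessel-Clifford function
`C_ν^{(b,λ)}(z;ρ) = z^{-ν/2} · G_ν^{(b,λ)}(2√z;ρ)` for real `z > 0`. -/
noncomputable def cliffC (b lam ν ρ : ℂ) (z : ℝ) : ℂ :=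
  (z:ℂ) ^ (-ν / 2) * unifiedG b lam ν ρ ((2 * Real.sqrt z : ℝ) : ℂ)

open Filter Topology

/-! Expanding `G` as its power series, each term is a multiple of `e^{-st} (t/2)^w`, whose
Laplace transform is `(1/(2s))^w Γ(w+1)/s`: the Gamma integral for real `s`, continued
analytically to `Re s > 0`. With `w = 2k + ν`, the factor `Γ(w+1)` cancels `Γ(ν+2k+1)`.

Sum and integral may be exchanged because the integrals of the norms are summable: the bounds
`|Γ_ρ(x)| ≤ 4 Γ(Re x + 2)/(Re ρ)²` and `|Γ(z+n)| Γ(Re z) ≥ |Γ(z)| Γ(Re z + n)` dominate them by a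
multiple of `Q^k Γ(A+2k)/(k! Γ(g+k))` with `Q = |b|/(4 (Re s)²)`, a series whose ratio of
consecutive terms tends to `4Q < 1`. -/

lemma integrableOn_rpow_mul_exp_neg_mul {c σ : ℝ} (hc : -1 < c) (hσ : 0 < σ) :
    IntegrableOn (fun t : ℝ => t ^ c * Real.exp (-(σ * t))) (Ioi 0) := by
  simpa [Real.rpow_one] using integrableOn_rpow_mul_exp_neg_mul_rpow hc one_pos hσ

lemma norm_cpow_mul_exp_neg_mul {t : ℝ} (ht : 0 < t) (w s : ℂ) :
    ‖(t : ℂ) ^ w * Complex.exp (-(s * t))‖ = t ^ w.re * Real.exp (-(s.re * t)) := by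
  rw [norm_mul, Complex.norm_exp, Complex.norm_cpow_eq_rpow_re_of_pos ht]
  simp

lemma continuousOn_cpow_mul_exp_neg_mul (w s : ℂ) :
    ContinuousOn (fun t : ℝ => (t : ℂ) ^ w * Complex.exp (-(s * t))) (Ioi 0) := by
  refine ContinuousOn.mul (fun t ht => ?_) (by fun_prop)
  exact ((continuousAt_cpow_const (Complex.ofReal_mem_slitPlane.2 ht)).comp
    Complex.continuous_ofReal.continuousAt).continuousWithinAt

lemma integrableOn_cpow_mul_exp_neg_mul {w s : ℂ} (hw : -1 < w.re) (hs : 0 < s.re) :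
    IntegrableOn (fun t : ℝ => (t : ℂ) ^ w * Complex.exp (-(s * t))) (Ioi 0) := by
  refine Integrable.mono' (integrableOn_rpow_mul_exp_neg_mul hw hs)
    ((continuousOn_cpow_mul_exp_neg_mul w s).aestronglyMeasurable measurableSet_Ioi) ?_
  filter_upwards [self_mem_ae_restrict measurableSet_Ioi] with t ht
  exact (norm_cpow_mul_exp_neg_mul ht w s).le

lemma differentiableOn_integral_cpow_mul_exp_neg_mul {a : ℂ} (ha : 0 < a.re) :
    DifferentiableOn ℂ (fun z : ℂ => ∫ t in Ioi (0 : ℝ), (t : ℂ) ^ (a - 1) * Complex.exp (-(z * t)))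
      {z | 0 < z.re} := by
  intro z₀ (hz₀ : 0 < z₀.re)
  have hε : 0 < z₀.re / 2 := by positivity
  have hball : ∀ z ∈ Metric.ball z₀ (z₀.re / 2), z₀.re / 2 ≤ z.re := fun z hz => by
    have := (abs_re_le_norm (z - z₀)).trans_lt (mem_ball_iff_norm.mp hz)
    rw [sub_re, abs_lt] at this
    linarith
  refine (hasDerivAt_integral_of_dominated_loc_of_deriv_le (μ := volume.restrict (Ioi 0))
    (F' := fun z t => (t : ℂ) ^ a * -Complex.exp (-(z * t)))
    (bound := fun t : ℝ => t ^ a.re * Real.exp (-(z₀.re / 2 * t)))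
    (Metric.ball_mem_nhds z₀ hε) ?_ ?_ ?_ ?_
    (integrableOn_rpow_mul_exp_neg_mul (by linarith) hε) ?_).2.differentiableAt
    |>.differentiableWithinAt
  · exact Eventually.of_forall fun z =>
      (continuousOn_cpow_mul_exp_neg_mul _ z).aestronglyMeasurable measurableSet_Ioi
  · exact integrableOn_cpow_mul_exp_neg_mul (by simpa using ha) hz₀
  · exact ((continuousOn_cpow_mul_exp_neg_mul a z₀).neg.aestronglyMeasurable
      measurableSet_Ioi).congr (Eventually.of_forall fun t => by simp)
  · filter_upwards [self_mem_ae_restrict measurableSet_Ioi] with t ht z hz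
    have ht' : 0 < t := ht
    rw [norm_mul, norm_neg, ← norm_mul, norm_cpow_mul_exp_neg_mul ht']
    gcongr
    nlinarith [hball z hz]
  · filter_upwards [self_mem_ae_restrict measurableSet_Ioi] with t ht z _
    have hta : (t : ℂ) ^ (a - 1) * t = (t : ℂ) ^ a := by
      rw [Complex.cpow_sub _ _ (by exact_mod_cast (mem_Ioi.mp ht).ne'), Complex.cpow_one,
        div_mul_cancel₀ _ (by exact_mod_cast (mem_Ioi.mp ht).ne')]
    refine (((hasDerivAt_id z).mul_const (t : ℂ)).neg.cexp.const_mul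
      ((t : ℂ) ^ (a - 1))).congr_deriv ?_
    rw [← hta]
    simp only [id_eq, one_mul, Pi.neg_apply]
    ring

lemma integral_cpow_mul_exp_neg_mul_Ioi_of_re_pos {a s : ℂ} (ha : 0 < a.re) (hs : 0 < s.re) :
    ∫ t in Ioi (0 : ℝ), (t : ℂ) ^ (a - 1) * Complex.exp (-(s * t)) = (1 / s) ^ a * Gamma a := by
  let U : Set ℂ := {z | 0 < z.re}
  have hU : IsOpen U := isOpen_lt continuous_const Complex.continuous_re
  have hrhs : DifferentiableOn ℂ (fun z : ℂ => (1 / z) ^ a * Gamma a) U := by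
    intro z (hz : 0 < z.re)
    have hz0 : z ≠ 0 := fun h => by simp [h] at hz
    refine (((differentiableAt_const 1).div differentiableAt_id hz0).cpow_const ?_).mul_const _
      |>.differentiableWithinAt
    exact Or.inl (by simpa [Complex.inv_re] using div_pos hz (Complex.normSq_pos.2 hz0))
  have hreal : Tendsto (fun r : ℝ => (r : ℂ)) (𝓝[>] 1) (𝓝[≠] 1) :=
    tendsto_nhdsWithin_of_tendsto_nhds_of_eventually_within _
      (Complex.continuous_ofReal.tendsto' 1 1 Complex.ofReal_one |>.mono_left nhdsWithin_le_nhds)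
      (eventually_nhdsWithin_of_forall fun r (hr : r ∈ Ioi 1) => by
        simpa [← Complex.ofReal_one] using (mem_Ioi.mp hr).ne')
  -- Both sides are holomorphic in `s` on the right half-plane and agree for real `s > 1`.
  refine ((differentiableOn_integral_cpow_mul_exp_neg_mul ha).analyticOnNhd hU)
    |>.eqOn_of_preconnected_of_frequently_eq (hrhs.analyticOnNhd hU)
      (convex_halfSpace_re_gt 0).isPreconnected (show (1 : ℂ) ∈ U by simp [U])
      (hreal.frequently ?_) hs
  exact (eventually_nhdsWithin_of_forall fun r (hr : r ∈ Ioi 1) =>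
    integral_cpow_mul_exp_neg_mul_Ioi ha (by linarith [mem_Ioi.mp hr])).frequently

lemma integral_exp_neg_mul_mul_div_two_cpow {s w : ℂ} (hs : 0 < s.re) (hw : -1 < w.re) :
    ∫ t in Ioi (0 : ℝ), Complex.exp (-s * t) * ((t : ℂ) / 2) ^ w =
      (1 / (2 * s)) ^ w * Gamma (w + 1) / s := by
  have h2s : (1 : ℂ) / (2 * s) ≠ 0 :=
    one_div_ne_zero (mul_ne_zero two_ne_zero fun h => by simp [h] at hs)
  rw [← mul_zero (2 : ℝ), ← integral_comp_mul_left_Ioi' _ 0 (two_pos : (0 : ℝ) < 2)]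
  have hlap := integral_cpow_mul_exp_neg_mul_Ioi_of_re_pos (a := w + 1) (s := 2 * s)
    (by simp; linarith) (by simpa using hs)
  simp only [add_sub_cancel_right] at hlap
  have hint : ∫ t in Ioi (0 : ℝ), Complex.exp (-s * ((2 * t : ℝ) : ℂ)) * (((2 * t : ℝ) : ℂ) / 2) ^ w
      = ∫ t in Ioi (0 : ℝ), (t : ℂ) ^ w * Complex.exp (-(2 * s * t)) :=
    integral_congr_ae (Eventually.of_forall fun t => by push_cast; ring_nf)
  rw [hint, hlap, Complex.cpow_add _ _ h2s, Complex.cpow_one]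
  simp only [Complex.real_smul]
  field_simp
  push_cast
  ring

lemma integrableOn_exp_neg_mul_mul_div_two_cpow {s w : ℂ} (hs : 0 < s.re) (hw : -1 < w.re) :
    IntegrableOn (fun t : ℝ => Complex.exp (-s * t) * ((t : ℂ) / 2) ^ w) (Ioi 0) := by
  have h := (integrableOn_Ioi_comp_mul_left_iff
    (fun t : ℝ => (t : ℂ) ^ w * Complex.exp (-(2 * s * t))) 0 (by norm_num : (0 : ℝ) < 1 / 2)).2
    (by simpa using integrableOn_cpow_mul_exp_neg_mul hw (by simpa using hs : 0 < (2 * s).re))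
  refine h.congr_fun (fun t _ => ?_) measurableSet_Ioi
  push_cast
  ring_nf

lemma integral_norm_exp_neg_mul_mul_div_two_cpow {s w : ℂ} (hs : 0 < s.re) (hw : -1 < w.re) :
    ∫ t in Ioi (0 : ℝ), ‖Complex.exp (-s * t) * ((t : ℂ) / 2) ^ w‖ =
      (1 / (2 * s.re)) ^ w.re * Real.Gamma (w.re + 1) / s.re := by
  have hw1 : 0 < w.re + 1 := by linarith
  have hnorm : EqOn (fun t : ℝ => ‖Complex.exp (-s * t) * ((t : ℂ) / 2) ^ w‖)
      (fun t => (1 / 2) ^ w.re * (t ^ (w.re + 1 - 1) * Real.exp (-(s.re * t)))) (Ioi 0) := by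
    intro t (ht : 0 < t)
    dsimp only
    rw [show (t : ℂ) / 2 = ((t / 2 : ℝ) : ℂ) by push_cast; rfl, norm_mul, Complex.norm_exp,
      Complex.norm_cpow_eq_rpow_re_of_pos (by positivity), add_sub_cancel_right,
      div_eq_mul_one_div t, Real.mul_rpow ht.le (by norm_num)]
    simp only [neg_mul, neg_re, mul_re, ofReal_re, ofReal_im, mul_zero, sub_zero]
    ring
  rw [setIntegral_congr_fun measurableSet_Ioi hnorm, integral_const_mul,
    integral_rpow_mul_exp_neg_mul_Ioi hw1 hs, Real.rpow_add_one (by positivity),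
    ← one_div_mul_one_div, Real.mul_rpow (by positivity) (by positivity)]
  ring

lemma exp_neg_le_four_div_sq {v : ℝ} (hv : 0 < v) : Real.exp (-v) ≤ 4 / v ^ 2 := by
  have hhalf : v / 2 ≤ Real.exp (v / 2) := by linarith [Real.add_one_le_exp (v / 2)]
  calc Real.exp (-v) = (Real.exp (v / 2) ^ 2)⁻¹ := by
        rw [Real.exp_neg, ← Real.exp_nat_mul]; ring_nf
    _ ≤ ((v / 2) ^ 2)⁻¹ := by gcongr
    _ = 4 / v ^ 2 := by ring

lemma norm_extGamma_le {ρ x : ℂ} (hρ : 0 < ρ.re) (hx : -2 < x.re) :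
    ‖extGamma ρ x‖ ≤ 4 / ρ.re ^ 2 * Real.Gamma (x.re + 2) := by
  -- `e^{-ρ/t} ≤ 4 t² / (Re ρ)²` trades the singularity at `0` for two more powers of `t`.
  have hbound : ∀ t ∈ Ioi (0 : ℝ), ‖(t : ℂ) ^ (x - 1) * Complex.exp (-(t : ℂ) - ρ / t)‖ ≤
      4 / ρ.re ^ 2 * (t ^ (x.re + 2 - 1) * Real.exp (-(1 * t))) := by
    intro t (ht : 0 < t)
    have hre : (-(t : ℂ) - ρ / t).re = -t + -(ρ.re / t) := by
      rw [sub_re, neg_re, ofReal_re, div_ofReal_re]; ring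
    rw [norm_mul, Complex.norm_cpow_eq_rpow_re_of_pos ht, Complex.norm_exp, hre, Real.exp_add]
    calc t ^ (x - 1).re * (Real.exp (-t) * Real.exp (-(ρ.re / t)))
        ≤ t ^ (x - 1).re * (Real.exp (-t) * (4 / (ρ.re / t) ^ 2)) := by
          gcongr; exact exp_neg_le_four_div_sq (by positivity)
      _ = 4 / ρ.re ^ 2 * (t ^ (x.re + 2 - 1) * Real.exp (-(1 * t))) := by
          rw [sub_re, one_re, show x.re + 2 - 1 = x.re - 1 + 2 by ring, Real.rpow_add ht,
            Real.rpow_two]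
          field_simp
  calc ‖extGamma ρ x‖
        ≤ ∫ t in Ioi (0 : ℝ), 4 / ρ.re ^ 2 * (t ^ (x.re + 2 - 1) * Real.exp (-(1 * t))) :=
        norm_integral_le_of_norm_le
          ((integrableOn_rpow_mul_exp_neg_mul (by linarith) one_pos).const_mul _)
          (ae_restrict_of_forall_mem measurableSet_Ioi hbound)
    _ = 4 / ρ.re ^ 2 * Real.Gamma (x.re + 2) := by
        rw [integral_const_mul, integral_rpow_mul_exp_neg_mul_Ioi (by linarith) one_pos]
        norm_num

lemma norm_genPoch_le {c ρ μ : ℂ} (hρ : 0 < ρ.re) (hcμ : -2 < c.re + μ.re) :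
    ‖genPoch c ρ μ‖ ≤ 4 / ρ.re ^ 2 * Real.Gamma (c.re + μ.re + 2) / ‖Gamma c‖ := by
  rw [genPoch, norm_div, ← add_re]
  gcongr
  exact norm_extGamma_le hρ (by simpa using hcμ)

lemma Gamma_re_add_nat_mul_norm_Gamma_le {z : ℂ} (hz : 0 < z.re) (n : ℕ) :
    Real.Gamma (z.re + n) * ‖Gamma z‖ ≤ ‖Gamma (z + n)‖ * Real.Gamma z.re := by
  induction n with
  | zero => simp [mul_comm]
  | succ n ih =>
    have hpos : 0 < z.re + n := by positivity
    have hzn : z + n ≠ 0 := fun h => by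
      have := congrArg Complex.re h
      simp only [add_re, natCast_re, zero_re] at this
      linarith
    push_cast
    rw [← add_assoc, ← add_assoc, Real.Gamma_add_one hpos.ne', Complex.Gamma_add_one _ hzn,
      norm_mul]
    calc (z.re + n) * Real.Gamma (z.re + n) * ‖Gamma z‖
        ≤ (z.re + n) * (‖Gamma (z + n)‖ * Real.Gamma z.re) := by
          rw [mul_assoc]; gcongr
      _ ≤ ‖z + n‖ * ‖Gamma (z + n)‖ * Real.Gamma z.re := by
          rw [← mul_assoc]
          gcongr
          simpa using Complex.re_le_norm (z + n)

lemma summable_pow_mul_Gamma_add_two_mul_div {Q A g : ℝ} (hQ : 0 ≤ Q) (hQ4 : 4 * Q < 1)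
    (hA : 0 < A) (hg : 0 < g) :
    Summable fun k : ℕ => Q ^ k * Real.Gamma (A + 2 * k) / (k.factorial * Real.Gamma (g + k)) := by
  set f : ℕ → ℝ := fun k => Q ^ k * Real.Gamma (A + 2 * k) / (k.factorial * Real.Gamma (g + k))
  have hf : ∀ k, 0 ≤ f k := fun k => by
    have := Real.Gamma_pos_of_pos (show 0 < A + 2 * k by positivity)
    have := Real.Gamma_pos_of_pos (show 0 < g + k by positivity)
    positivity
  set r : ℕ → ℝ := fun k => Q * ((A + 1 + 2 * k) / (1 + 1 * k)) * ((A + 2 * k) / (g + 1 * k))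
  have hratio : ∀ k : ℕ, f (k + 1) = r k * f k := by
    intro k
    have hΓA : Real.Gamma (A + 2 * ↑(k + 1)) =
        (A + 1 + 2 * k) * ((A + 2 * k) * Real.Gamma (A + 2 * k)) := by
      rw [show A + 2 * ↑(k + 1) = A + 2 * k + 1 + 1 by push_cast; ring,
        Real.Gamma_add_one (by positivity), Real.Gamma_add_one (by positivity)]
      ring
    have hΓg : Real.Gamma (g + ↑(k + 1)) = (g + k) * Real.Gamma (g + k) := by
      rw [Nat.cast_succ, ← add_assoc, Real.Gamma_add_one (by positivity)]
    have := Real.Gamma_pos_of_pos (show 0 < g + k by positivity)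
    simp only [f, r, hΓA, hΓg, Nat.factorial_succ]
    push_cast
    field_simp
    ring
  have hlim : Tendsto r atTop (𝓝 (Q * (2 / 1) * (2 / 1))) :=
    ((tendsto_add_mul_div_add_mul_atTop_nhds _ _ _ one_ne_zero).const_mul Q).mul
      (tendsto_add_mul_div_add_mul_atTop_nhds _ _ _ one_ne_zero)
  refine summable_of_ratio_norm_eventually_le (r := (4 * Q + 1) / 2) (by linarith) ?_
  have hlt : Q * (2 / 1) * (2 / 1) < (4 * Q + 1) / 2 := by linarith
  filter_upwards [hlim.eventually_lt_const hlt] with k hk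
  rw [Real.norm_of_nonneg (hf _), Real.norm_of_nonneg (hf _), hratio]
  exact mul_le_mul_of_nonneg_right hk.le (hf k)

noncomputable def unifiedGCoeff (b c ν ρ : ℂ) (k : ℕ) : ℂ :=
  (-b) ^ k * genPoch c ρ (2 * k + ν) /
    (k.factorial * Gamma (ν + k + 1) * Gamma (ν + 2 * k + 1))

lemma unifiedG_eq_tsum (b c ν ρ z : ℂ) :
    unifiedG b c ν ρ z = ∑' k : ℕ, unifiedGCoeff b c ν ρ k * (z / 2) ^ (2 * (k : ℂ) + ν) :=
  tsum_congr fun k => by rw [unifiedGCoeff]; ring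

section Coefficients

variable {b c ν ρ : ℂ}

lemma norm_unifiedGCoeff_le (hρ : 0 < ρ.re) (hc : 0 < c.re) (hν : -1 < ν.re) (k : ℕ) :
    ‖unifiedGCoeff b c ν ρ k‖ ≤
      ‖b‖ ^ k * (4 / ρ.re ^ 2 * Real.Gamma (c.re + ν.re + 2 + 2 * k) / ‖Gamma c‖) /
        (k.factorial * (‖Gamma (ν + 1)‖ * Real.Gamma (ν.re + 1 + k) / Real.Gamma (ν.re + 1)) *
          (‖Gamma (ν + 1)‖ * Real.Gamma (ν.re + 1 + 2 * k) / Real.Gamma (ν.re + 1))) := by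
  have hν1 : 0 < (ν + 1).re := by simp; linarith
  have hΓν := norm_pos_iff.mpr (Gamma_ne_zero_of_re_pos hν1)
  have hΓre := Real.Gamma_pos_of_pos hν1
  have hlower : ∀ n : ℕ, ‖Gamma (ν + 1)‖ * Real.Gamma (ν.re + 1 + n) / Real.Gamma (ν.re + 1) ≤
      ‖Gamma (ν + 1 + n)‖ := fun n => by
    rw [div_le_iff₀ (by simpa using hΓre), mul_comm]
    simpa using Gamma_re_add_nat_mul_norm_Gamma_le hν1 n
  have hcW : 0 < c.re + (2 * (k : ℂ) + ν).re + 2 := by simp; linarith [k.cast_nonneg (α := ℝ)]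
  have hgen := norm_genPoch_le (c := c) (μ := 2 * k + ν) hρ (by linarith)
  have := Real.Gamma_pos_of_pos hcW
  rw [unifiedGCoeff, norm_div, norm_mul, norm_pow, norm_neg, norm_mul, norm_mul,
    Complex.norm_natCast]
  have h1 := hlower k
  have h2 := hlower (2 * k)
  have := Real.Gamma_pos_of_pos (show 0 < ν.re + 1 + k by positivity)
  have := Real.Gamma_pos_of_pos (show 0 < ν.re + 1 + 2 * k by positivity)
  push_cast at h2
  rw [show ν + 1 + k = ν + k + 1 by ring] at h1
  rw [show ν + 1 + 2 * k = ν + 2 * k + 1 by ring] at h2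
  rw [show c.re + ν.re + 2 + 2 * k = c.re + (2 * (k : ℂ) + ν).re + 2 by simp; ring]
  gcongr

lemma integral_exp_neg_mul_mul_unifiedG_term {s : ℂ} (hs : 0 < s.re) (hν : -1 < ν.re) (k : ℕ) :
    ∫ t in Ioi (0 : ℝ), unifiedGCoeff b c ν ρ k *
        (Complex.exp (-s * t) * ((t : ℂ) / 2) ^ (2 * (k : ℂ) + ν)) =
      1 / s * ((-b) ^ k * genPoch c ρ (2 * (k : ℂ) + ν) * (1 / (2 * s)) ^ (2 * (k : ℂ) + ν) /
        ((k.factorial : ℂ) * Gamma (ν + (k : ℂ) + 1))) := by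
  have hk : (0 : ℝ) ≤ k := k.cast_nonneg
  have hΓ : Gamma (ν + 2 * k + 1) ≠ 0 := Gamma_ne_zero_of_re_pos (by simp; linarith)
  rw [integral_const_mul, integral_exp_neg_mul_mul_div_two_cpow hs (by simp; linarith),
    unifiedGCoeff, show 2 * (k : ℂ) + ν + 1 = ν + 2 * k + 1 by ring]
  field_simp

lemma summable_integral_norm_exp_neg_mul_mul_unifiedG_term {s : ℂ} (hρ : 0 < ρ.re)
    (hc : 0 < c.re) (hν : -1 < ν.re) (hs : 0 < s.re) (hsb : Real.sqrt ‖b‖ < s.re) :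
    Summable fun k : ℕ => ∫ t in Ioi (0 : ℝ), ‖unifiedGCoeff b c ν ρ k *
        (Complex.exp (-s * t) * ((t : ℂ) / 2) ^ (2 * (k : ℂ) + ν))‖ := by
  set x : ℝ := 1 / (2 * s.re)
  have hx : 0 < x := by positivity
  have hQ : 4 * (‖b‖ * x ^ 2) < 1 := by
    rw [show 4 * (‖b‖ * x ^ 2) = ‖b‖ / s.re ^ 2 by simp only [x]; field_simp; ring,
      div_lt_one (by positivity), ← Real.sqrt_lt' hs]
    exact hsb
  refine Summable.of_nonneg_of_le (fun k => integral_nonneg fun t => norm_nonneg _) (fun k => ?_)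
    ((summable_pow_mul_Gamma_add_two_mul_div (by positivity : 0 ≤ ‖b‖ * x ^ 2) hQ
      (by linarith : 0 < c.re + ν.re + 2) (by linarith : 0 < ν.re + 1)).mul_left
      (4 / ρ.re ^ 2 / ‖Gamma c‖ * (Real.Gamma (ν.re + 1) / ‖Gamma (ν + 1)‖) ^ 2 * x ^ ν.re / s.re))
  have hk : (0 : ℝ) ≤ k := k.cast_nonneg
  simp_rw [norm_mul (unifiedGCoeff b c ν ρ k)]
  rw [integral_const_mul, integral_norm_exp_neg_mul_mul_div_two_cpow hs (by simp; linarith)]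
  have hΓ := Real.Gamma_pos_of_pos (show 0 < (2 * (k : ℂ) + ν).re + 1 by simp; linarith)
  refine (mul_le_mul_of_nonneg_right (norm_unifiedGCoeff_le hρ hc hν k) (by positivity)).trans_eq ?_
  have hxpow : x ^ (2 * (k : ℝ) + ν.re) = (x ^ 2) ^ k * x ^ ν.re := by
    rw [Real.rpow_add hx, ← pow_mul, ← Real.rpow_natCast]; push_cast; ring_nf
  have hΓν : ‖Gamma (ν + 1)‖ ≠ 0 :=
    norm_ne_zero_iff.mpr (Gamma_ne_zero_of_re_pos (by simp; linarith))
  have := Real.Gamma_pos_of_pos (show 0 < ν.re + 1 by linarith)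
  have := Real.Gamma_pos_of_pos (show 0 < ν.re + 1 + k by linarith)
  have := Real.Gamma_pos_of_pos (show 0 < ν.re + 1 + 2 * k by linarith)
  simp only [add_re, mul_re, re_ofNat, im_ofNat, natCast_re, natCast_im, mul_zero, sub_zero]
  rw [hxpow, show 2 * (k : ℝ) + ν.re + 1 = ν.re + 1 + 2 * k by ring, mul_pow]
  field_simp

end Coefficients

theorem stmt4 (b c ν ρ s : ℂ) (hρ : 0 < ρ.re) (hc : 0 < c.re) (hν : -1 < ν.re)
    (hs : 0 < s.re) (hsb : Real.sqrt ‖b‖ < s.re) :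
    (∫ t in Ioi (0:ℝ), Complex.exp (-s * (t:ℂ)) * unifiedG b c ν ρ (t:ℂ)) =
      1 / s * ∑' k : ℕ, (-b) ^ k * genPoch c ρ (2 * (k:ℂ) + ν) *
        (1 / (2 * s)) ^ (2 * (k:ℂ) + ν) /
        ((k.factorial : ℂ) * Complex.Gamma (ν + (k:ℂ) + 1)) := by
  have hterm_int : ∀ k : ℕ, Integrable (fun t : ℝ => unifiedGCoeff b c ν ρ k *
      (Complex.exp (-s * t) * ((t : ℂ) / 2) ^ (2 * (k : ℂ) + ν))) (volume.restrict (Ioi 0)) :=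
    fun k => (integrableOn_exp_neg_mul_mul_div_two_cpow hs
      (by simp; linarith [k.cast_nonneg (α := ℝ)])).const_mul _
  calc (∫ t in Ioi (0:ℝ), Complex.exp (-s * (t:ℂ)) * unifiedG b c ν ρ (t:ℂ))
      = ∫ t in Ioi (0:ℝ), ∑' k : ℕ, unifiedGCoeff b c ν ρ k *
          (Complex.exp (-s * t) * ((t : ℂ) / 2) ^ (2 * (k : ℂ) + ν)) := by
        simp_rw [unifiedG_eq_tsum, ← tsum_mul_left, mul_left_comm]
    _ = ∑' k : ℕ, ∫ t in Ioi (0:ℝ), unifiedGCoeff b c ν ρ k *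
          (Complex.exp (-s * t) * ((t : ℂ) / 2) ^ (2 * (k : ℂ) + ν)) :=
        (integral_tsum_of_summable_integral_norm hterm_int
          (summable_integral_norm_exp_neg_mul_mul_unifiedG_term hρ hc hν hs hsb)).symm
    _ = _ := by
        simp_rw [integral_exp_neg_mul_mul_unifiedG_term hs hν]
        exact tsum_mul_left
end

section
/- Let b, c, ν, ρ ∈ ℂ with Re(ρ) > 0, Re(c) > 1 and Re(ν) > 0, and for μ ∈ ℂ write f_μ(x) = G_μ^{(b,c-1)}(x;ρ) for real x > 0. Then for every real x > 0, (2-ν) · f_{ν-1}'(x) + x · ( f_{ν-1}''(x) + b · f_{ν+1}''(x) ) = -b(ν+2) · f_{ν+1}'(x), where the derivatives are with respect to the real variable x. -/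
open Complex MeasureTheory Real Set

/-!
On the positive axis `G_μ(y) = ∑ a_k (y/2)^(2k+μ)`, and the coefficients `a_k` decay faster than
any geometric sequence: `|Γ_ρ(w)| ≤ Γ(Re w)` bounds them by a majorant whose successive ratios are
`O(1/k)`. Hence the series may be differentiated termwise twice on `(0, ∞)`. After
differentiating, the `(k+1)`-st term of the left-hand side (order `ν - 1`) equals the `k`-th
term of the right-hand side (order `ν + 1`), because `Γ(ν+k+2) = (ν+k+1) Γ(ν+k+1)`, while the
zeroth term of the left-hand side vanishes.
-/

open Filter Topology

def IsEntireCoeffs (a : ℕ → ℂ) : Prop := ∀ R : ℝ, Summable fun k => ‖a k‖ * R ^ k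

noncomputable def besselTerm (a : ℕ → ℂ) (μ : ℂ) (y : ℝ) (k : ℕ) : ℂ :=
  a k * ((y : ℂ) / 2) ^ (2 * (k : ℂ) + μ)

noncomputable def besselSeries (a : ℕ → ℂ) (μ : ℂ) (y : ℝ) : ℂ := ∑' k, besselTerm a μ y k

noncomputable def derivCoeff (a : ℕ → ℂ) (μ : ℂ) (k : ℕ) : ℂ := a k * ((2 * k + μ) / 2)

theorem Real.rpow_le_rpow_add_rpow {α β y : ℝ} (hα : 0 < α) (hy : y ∈ Icc α β) (s : ℝ) :
    y ^ s ≤ α ^ s + β ^ s := by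
  rcases le_total 0 s with hs | hs
  · have := Real.rpow_le_rpow (hα.le.trans hy.1) hy.2 hs
    linarith [Real.rpow_nonneg hα.le s]
  · have := Real.rpow_le_rpow_of_nonpos hα hy.1 hs
    linarith [Real.rpow_nonneg (hα.le.trans (hy.1.trans hy.2)) s]

theorem norm_besselTerm (a : ℕ → ℂ) (μ : ℂ) {y : ℝ} (hy : 0 < y) (k : ℕ) :
    ‖besselTerm a μ y k‖ = ‖a k‖ * ((y / 2) ^ 2) ^ k * (y / 2) ^ μ.re := by
  have hcast : (y : ℂ) / 2 = ((y / 2 : ℝ) : ℂ) := by push_cast; rfl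
  have hre : (2 * (k : ℂ) + μ).re = ((2 * k : ℕ) : ℝ) + μ.re := by simp
  rw [besselTerm, norm_mul, hcast, Complex.norm_cpow_eq_rpow_re_of_pos (by positivity), hre,
    Real.rpow_add (by positivity), Real.rpow_natCast, pow_mul, mul_assoc]

theorem hasDerivAt_half_cpow (w : ℂ) {y : ℝ} (hy : 0 < y) :
    HasDerivAt (fun y : ℝ => ((y : ℂ) / 2) ^ w) (w / 2 * ((y : ℂ) / 2) ^ (w - 1)) y := by
  have hmem : (y : ℂ) / 2 ∈ Complex.slitPlane := by
    rw [show (y : ℂ) / 2 = ((y / 2 : ℝ) : ℂ) by push_cast; rfl]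
    exact Complex.ofReal_mem_slitPlane.2 (by positivity)
  have h := (((hasDerivAt_id (y : ℂ)).div_const 2).cpow_const (c := w) hmem).comp_ofReal
  simp only [id] at h
  convert h using 1
  ring

theorem hasDerivAt_besselTerm (a : ℕ → ℂ) (μ : ℂ) {y : ℝ} (hy : 0 < y) (k : ℕ) :
    HasDerivAt (besselTerm a μ · k) (besselTerm (derivCoeff a μ) (μ - 1) y k) y := by
  refine ((hasDerivAt_half_cpow (2 * (k : ℂ) + μ) hy).const_mul (a k)).congr_deriv ?_
  rw [besselTerm, derivCoeff, ← add_sub_assoc]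
  ring

section

variable {a : ℕ → ℂ}

theorem isEntireCoeffs_derivCoeff (ha : IsEntireCoeffs a) (μ : ℂ) :
    IsEntireCoeffs (derivCoeff a μ) := by
  intro R
  refine .of_norm_bounded ((ha (2 * |R|)).add ((ha |R|).mul_left ‖μ‖)) fun k => ?_
  have hk : (k : ℝ) ≤ 2 ^ k := by exact_mod_cast Nat.lt_two_pow_self.le
  have hfac : ‖(2 * (k : ℂ) + μ) / 2‖ ≤ k + ‖μ‖ := by
    rw [norm_div, Complex.norm_two, div_le_iff₀ two_pos]
    calc ‖2 * (k : ℂ) + μ‖ ≤ 2 * k + ‖μ‖ := by simpa using norm_add_le (2 * (k : ℂ)) μ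
      _ ≤ (k + ‖μ‖) * 2 := by linarith [norm_nonneg μ]
  rw [norm_mul, norm_norm, derivCoeff, norm_mul, norm_pow, Real.norm_eq_abs]
  calc ‖a k‖ * ‖(2 * (k : ℂ) + μ) / 2‖ * |R| ^ k ≤ ‖a k‖ * (k + ‖μ‖) * |R| ^ k := by gcongr
    _ = ‖a k‖ * (k * |R| ^ k) + ‖μ‖ * (‖a k‖ * |R| ^ k) := by ring
    _ ≤ ‖a k‖ * (2 * |R|) ^ k + ‖μ‖ * (‖a k‖ * |R| ^ k) := by rw [mul_pow]; gcongr

namespace IsEntireCoeffs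

theorem exists_summable_bound (ha : IsEntireCoeffs a) (μ : ℂ) {α β : ℝ} (hα : 0 < α) :
    ∃ u : ℕ → ℝ, Summable u ∧ ∀ k, ∀ y ∈ Icc α β, ‖besselTerm a μ y k‖ ≤ u k := by
  refine ⟨fun k => ‖a k‖ * ((β / 2) ^ 2) ^ k * ((α / 2) ^ μ.re + (β / 2) ^ μ.re),
    (ha _).mul_right _, fun k y hy => ?_⟩
  have hy0 : 0 < y := hα.trans_le hy.1
  have hrpow : (y / 2) ^ μ.re ≤ (α / 2) ^ μ.re + (β / 2) ^ μ.re :=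
    Real.rpow_le_rpow_add_rpow (by positivity) ⟨by linarith [hy.1], by linarith [hy.2]⟩ _
  rw [norm_besselTerm a μ hy0]
  exact mul_le_mul (by gcongr; exact hy.2) hrpow (by positivity) (by positivity)

theorem summable_besselTerm (ha : IsEntireCoeffs a) (μ : ℂ) {y : ℝ} (hy : 0 < y) :
    Summable (besselTerm a μ y) := by
  obtain ⟨u, hu, hbound⟩ := ha.exists_summable_bound μ (β := y) hy
  exact .of_norm_bounded hu fun k => hbound k y ⟨le_rfl, le_rfl⟩

theorem hasDerivAt_besselSeries (ha : IsEntireCoeffs a) (μ : ℂ) {y : ℝ} (hy : 0 < y) :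
    HasDerivAt (besselSeries a μ) (besselSeries (derivCoeff a μ) (μ - 1) y) y := by
  obtain ⟨u, hu, hbound⟩ := (isEntireCoeffs_derivCoeff ha μ).exists_summable_bound (μ - 1)
    (α := y / 2) (β := 2 * y) (by positivity)
  have hyt : y ∈ Ioo (y / 2) (2 * y) := ⟨by linarith, by linarith⟩
  exact hasDerivAt_tsum_of_isPreconnected hu isOpen_Ioo isPreconnected_Ioo
    (fun k z hz => hasDerivAt_besselTerm a μ (by linarith [hz.1]) k)
    (fun k z hz => hbound k z (Ioo_subset_Icc_self hz)) hyt (ha.summable_besselTerm μ hy) hyt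

theorem deriv_besselSeries (ha : IsEntireCoeffs a) (μ : ℂ) {y : ℝ} (hy : 0 < y) :
    deriv (besselSeries a μ) y = besselSeries (derivCoeff a μ) (μ - 1) y :=
  (ha.hasDerivAt_besselSeries μ hy).deriv

theorem deriv_deriv_besselSeries (ha : IsEntireCoeffs a) (μ : ℂ) {y : ℝ} (hy : 0 < y) :
    deriv (deriv (besselSeries a μ)) y =
      besselSeries (derivCoeff (derivCoeff a μ) (μ - 1)) (μ - 1 - 1) y := by
  have h : deriv (besselSeries a μ) =ᶠ[𝓝 y] besselSeries (derivCoeff a μ) (μ - 1) :=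
    (eventually_gt_nhds hy).mono fun z hz => ha.deriv_besselSeries μ hz
  rw [h.deriv_eq]
  exact (isEntireCoeffs_derivCoeff ha μ).deriv_besselSeries (μ - 1) hy

end IsEntireCoeffs

end

theorem summable_mul_pow_of_le_div_succ {f : ℕ → ℝ} {C : ℝ} (hf : ∀ᶠ k in atTop, 0 ≤ f k)
    (h : ∀ᶠ k : ℕ in atTop, f (k + 1) ≤ C / (k + 1) * f k) (R : ℝ) :
    Summable fun k => f k * R ^ k := by
  refine summable_of_ratio_norm_eventually_le (r := 1 / 2) (by norm_num) ?_
  have hlarge : ∀ᶠ k : ℕ in atTop, 2 * C * |R| ≤ k :=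
    tendsto_natCast_atTop_atTop.eventually_ge_atTop _
  filter_upwards [hf, (tendsto_add_atTop_nat 1).eventually hf, h, hlarge]
    with k hk hk1 hrec hkC
  have hsmall : C * |R| / (k + 1) ≤ 1 / 2 := by
    rw [div_le_iff₀ (by positivity)]
    linarith
  rw [norm_mul, norm_mul, norm_pow, norm_pow, Real.norm_of_nonneg hk, Real.norm_of_nonneg hk1,
    Real.norm_eq_abs]
  calc f (k + 1) * |R| ^ (k + 1) ≤ C / (k + 1) * f k * |R| ^ (k + 1) := by gcongr
    _ = C * |R| / (k + 1) * (f k * |R| ^ k) := by ring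
    _ ≤ 1 / 2 * (f k * |R| ^ k) := by gcongr

theorem norm_extGamma_le_s11 {ρ : ℂ} (hρ : 0 ≤ ρ.re) {w : ℂ} (hw : 0 < w.re) :
    ‖extGamma ρ w‖ ≤ Real.Gamma w.re := by
  rw [extGamma, Real.Gamma_eq_integral hw]
  refine (norm_integral_le_integral_norm _).trans <| integral_mono_of_nonneg
    (.of_forall fun t => norm_nonneg _) (Real.GammaIntegral_convergent hw) ?_
  filter_upwards [ae_restrict_mem measurableSet_Ioi] with t (ht : 0 < t)
  have hre : (-(t : ℂ) - ρ / t).re = -t - ρ.re / t := by simp [Complex.div_ofReal_re]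
  have hexp : Real.exp (-t - ρ.re / t) ≤ Real.exp (-t) :=
    Real.exp_le_exp.2 (by linarith [div_nonneg hρ ht.le])
  rw [norm_mul, Complex.norm_cpow_eq_rpow_re_of_pos ht, Complex.norm_exp, hre, mul_comm]
  simp only [Complex.sub_re, Complex.one_re]
  gcongr

noncomputable def besselCoeff (b c ρ μ : ℂ) (k : ℕ) : ℂ :=
  (-b) ^ k * genPoch c ρ (2 * k + μ) /
    (k.factorial * Complex.Gamma (μ + k + 1) * Complex.Gamma (μ + 2 * k + 1))

theorem unifiedG_ofReal_eq_besselSeries (b c μ ρ : ℂ) :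
    (fun y : ℝ => unifiedG b c μ ρ y) = besselSeries (besselCoeff b c ρ μ) μ := by
  funext y
  exact tsum_congr fun k => by rw [besselTerm, besselCoeff]; ring

noncomputable def besselMajorant (b c μ : ℂ) (k : ℕ) : ℝ :=
  ‖b‖ ^ k * Real.Gamma (c.re + 2 * k + μ.re) /
    (‖Complex.Gamma c‖ * k.factorial * ‖Complex.Gamma (μ + k + 1)‖ *
      ‖Complex.Gamma (μ + 2 * k + 1)‖)

theorem norm_besselCoeff_le (b c μ : ℂ) {ρ : ℂ} (hρ : 0 ≤ ρ.re) {k : ℕ}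
    (hk : 0 < c.re + 2 * k + μ.re) : ‖besselCoeff b c ρ μ k‖ ≤ besselMajorant b c μ k := by
  have hre : (c + (2 * k + μ)).re = c.re + 2 * k + μ.re := by
    simp only [add_re, mul_re, re_ofNat, natCast_re, im_ofNat, natCast_im, mul_zero, sub_zero]
    ring
  have hE := norm_extGamma_le_s11 hρ (w := c + (2 * k + μ)) (by rwa [hre])
  rw [hre] at hE
  rw [besselCoeff, besselMajorant, genPoch]
  simp only [norm_div, norm_mul, norm_pow, norm_neg, Complex.norm_natCast]
  calc _ = ‖b‖ ^ k * ‖extGamma ρ (c + (2 * k + μ))‖ /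
        (‖Complex.Gamma c‖ * k.factorial * ‖Complex.Gamma (μ + k + 1)‖ *
          ‖Complex.Gamma (μ + 2 * k + 1)‖) := by ring
    _ ≤ _ := by gcongr

theorem besselMajorant_nonneg (b c μ : ℂ) {k : ℕ} (hk : 0 < c.re + 2 * k + μ.re) :
    0 ≤ besselMajorant b c μ k :=
  div_nonneg (mul_nonneg (by positivity) (Real.Gamma_pos_of_pos hk).le) (by positivity)

theorem besselMajorant_succ (b c μ : ℂ) {k : ℕ} (h₁ : μ + k + 1 ≠ 0) (h₂ : μ + 2 * k + 1 ≠ 0)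
    (h₃ : μ + 2 * k + 2 ≠ 0) (hτ : 0 < c.re + 2 * k + μ.re) :
    besselMajorant b c μ (k + 1) =
      ‖b‖ * ((c.re + 2 * k + μ.re) * (c.re + 2 * k + μ.re + 1)) /
        ((k + 1) * ‖μ + k + 1‖ * ‖μ + 2 * k + 1‖ * ‖μ + 2 * k + 2‖) *
          besselMajorant b c μ k := by
  have h₃' : μ + 2 * k + 1 + 1 ≠ 0 := by rwa [add_assoc, one_add_one_eq_two]
  have hGk : Complex.Gamma (μ + (k + 1 : ℂ) + 1) = (μ + k + 1) * Complex.Gamma (μ + k + 1) := by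
    rw [show μ + (k + 1 : ℂ) + 1 = μ + k + 1 + 1 by ring, Complex.Gamma_add_one _ h₁]
  have hG2k : Complex.Gamma (μ + 2 * (k + 1 : ℂ) + 1) =
      (μ + 2 * k + 2) * ((μ + 2 * k + 1) * Complex.Gamma (μ + 2 * k + 1)) := by
    rw [show μ + 2 * (k + 1 : ℂ) + 1 = μ + 2 * k + 1 + 1 + 1 by ring,
      Complex.Gamma_add_one _ h₃', Complex.Gamma_add_one _ h₂, add_assoc _ (1 : ℂ),
      one_add_one_eq_two]
  have hGτ : Real.Gamma (c.re + 2 * (k + 1 : ℝ) + μ.re) =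
      (c.re + 2 * k + μ.re + 1) * ((c.re + 2 * k + μ.re) * Real.Gamma (c.re + 2 * k + μ.re)) := by
    rw [show c.re + 2 * (k + 1 : ℝ) + μ.re = c.re + 2 * k + μ.re + 1 + 1 by ring,
      Real.Gamma_add_one (by linarith), Real.Gamma_add_one hτ.ne']
  simp only [besselMajorant, Nat.cast_add, Nat.cast_one, Nat.factorial_succ, Nat.cast_mul]
  rw [hGk, hG2k, hGτ]
  simp only [norm_mul, div_eq_mul_inv, mul_inv]
  ring

theorem besselMajorant_succ_le (b c μ : ℂ) :
    ∀ᶠ k : ℕ in atTop,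
      besselMajorant b c μ (k + 1) ≤ 4 * ‖b‖ / (k + 1) * besselMajorant b c μ k := by
  -- Beyond this index all Gamma arguments have positive real part and
  -- `c.re + 2k + μ.re ≤ 2 (μ.re + 2k + 1)`; this is where the factor `4` comes from.
  filter_upwards [tendsto_natCast_atTop_atTop.eventually_ge_atTop (|c.re| + |μ.re| + 1)]
    with k hk
  obtain ⟨hc₁, hc₂⟩ := abs_le.mp (le_refl |c.re|)
  obtain ⟨hμ₁, hμ₂⟩ := abs_le.mp (le_refl |μ.re|)
  have hτ : 0 < c.re + 2 * k + μ.re := by linarith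
  have hN : μ.re + k + 1 ≤ ‖μ + k + 1‖ := by simpa using Complex.re_le_norm (μ + k + 1)
  have hm₁ : μ.re + 2 * k + 1 ≤ ‖μ + 2 * k + 1‖ := by
    simpa using Complex.re_le_norm (μ + 2 * k + 1)
  have hm₂ : μ.re + 2 * k + 2 ≤ ‖μ + 2 * k + 2‖ := by
    simpa using Complex.re_le_norm (μ + 2 * k + 2)
  have hD : 0 < (k + 1) * ‖μ + k + 1‖ * ‖μ + 2 * k + 1‖ * ‖μ + 2 * k + 2‖ := by
    apply mul_pos (mul_pos (mul_pos _ _) _) _ <;> linarith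
  have hquad : (c.re + 2 * k + μ.re) * (c.re + 2 * k + μ.re + 1) ≤
      4 * (‖μ + k + 1‖ * ‖μ + 2 * k + 1‖ * ‖μ + 2 * k + 2‖) :=
    calc _ ≤ (2 * (μ.re + 2 * k + 1)) * (2 * (μ.re + 2 * k + 2)) := by gcongr <;> linarith
      _ = 4 * (1 * (μ.re + 2 * k + 1) * (μ.re + 2 * k + 2)) := by ring
      _ ≤ _ := by gcongr <;> linarith
  rw [besselMajorant_succ b c μ (norm_pos_iff.mp (by linarith)) (norm_pos_iff.mp (by linarith))
    (norm_pos_iff.mp (by linarith)) hτ]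
  refine mul_le_mul_of_nonneg_right ?_ (besselMajorant_nonneg b c μ hτ)
  rw [div_le_div_iff₀ hD (by linarith)]
  calc _ ≤ ‖b‖ * (4 * (‖μ + k + 1‖ * ‖μ + 2 * k + 1‖ * ‖μ + 2 * k + 2‖)) * (k + 1) := by
        gcongr
    _ = 4 * ‖b‖ * ((k + 1) * ‖μ + k + 1‖ * ‖μ + 2 * k + 1‖ * ‖μ + 2 * k + 2‖) := by ring

theorem isEntireCoeffs_besselCoeff (b c μ : ℂ) {ρ : ℂ} (hρ : 0 ≤ ρ.re) :
    IsEntireCoeffs (besselCoeff b c ρ μ) := by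
  have hpos : ∀ᶠ k : ℕ in atTop, 0 < c.re + 2 * k + μ.re := by
    filter_upwards [tendsto_natCast_atTop_atTop.eventually_gt_atTop (|c.re| + |μ.re|)] with k hk
    linarith [neg_abs_le c.re, neg_abs_le μ.re]
  intro R
  refine (summable_mul_pow_of_le_div_succ (hpos.mono fun k => besselMajorant_nonneg b c μ)
    (besselMajorant_succ_le b c μ) |R|).of_norm_bounded_eventually ?_
  rw [Nat.cofinite_eq_atTop]
  filter_upwards [hpos] with k hk
  rw [norm_mul, norm_norm, norm_pow, Real.norm_eq_abs]
  gcongr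
  exact norm_besselCoeff_le b c μ hρ hk

theorem besselCoeff_succ_mul (b c ρ : ℂ) {ν : ℂ} {k : ℕ} (hν : ν + k + 1 ≠ 0) :
    besselCoeff b c ρ (ν - 1) (k + 1) * (k + 1) =
      -b * besselCoeff b c ρ (ν + 1) k * (ν + k + 1) := by
  have hG : Complex.Gamma (ν + 1 + k + 1) = (ν + k + 1) * Complex.Gamma (ν + k + 1) := by
    rw [← Complex.Gamma_add_one _ hν]
    ring_nf
  simp only [besselCoeff, Nat.factorial_succ, Nat.cast_mul, Nat.cast_add, Nat.cast_one, pow_succ]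
  rw [show 2 * ((k : ℂ) + 1) + (ν - 1) = 2 * k + (ν + 1) by ring,
    show ν - 1 + ((k : ℂ) + 1) + 1 = ν + k + 1 by ring,
    show ν - 1 + 2 * ((k : ℂ) + 1) + 1 = ν + 1 + 2 * k + 1 by ring, hG]
  field_simp

theorem cpow_eq_cpow_mul_self {z : ℂ} (hz : z ≠ 0) {e e' : ℂ} (h : e = e' + 1) :
    z ^ e = z ^ e' * z := by
  rw [h, Complex.cpow_add _ _ hz, Complex.cpow_one]

section Recurrence

variable {A B : ℕ → ℂ} {b ν : ℂ} {x : ℝ}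

theorem besselTerm_recurrence_zero (hx : x ≠ 0) :
    (2 - ν) * besselTerm (derivCoeff A (ν - 1)) (ν - 1 - 1) x 0 +
      x * besselTerm (derivCoeff (derivCoeff A (ν - 1)) (ν - 1 - 1)) (ν - 1 - 1 - 1) x 0 = 0 := by
  have hh : (x : ℂ) / 2 ≠ 0 := div_ne_zero (Complex.ofReal_ne_zero.2 hx) two_ne_zero
  simp only [besselTerm, derivCoeff, Nat.cast_zero, mul_zero, zero_add]
  rw [cpow_eq_cpow_mul_self hh (e' := ν - 1 - 1 - 1) (by ring)]
  ring

theorem besselTerm_recurrence_succ (hx : x ≠ 0) {k : ℕ}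
    (hAB : A (k + 1) * (k + 1) = -b * B k * (ν + k + 1)) :
    (2 - ν) * besselTerm (derivCoeff A (ν - 1)) (ν - 1 - 1) x (k + 1) +
        x * besselTerm (derivCoeff (derivCoeff A (ν - 1)) (ν - 1 - 1)) (ν - 1 - 1 - 1) x (k + 1) =
      -b * (ν + 2) * besselTerm (derivCoeff B (ν + 1)) (ν + 1 - 1) x k -
        x * b * besselTerm (derivCoeff (derivCoeff B (ν + 1)) (ν + 1 - 1)) (ν + 1 - 1 - 1) x k := by
  set h : ℂ := (x : ℂ) / 2 with h_def
  have hh : h ≠ 0 := div_ne_zero (Complex.ofReal_ne_zero.2 hx) two_ne_zero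
  have hxh : (x : ℂ) = 2 * h := by rw [h_def]; ring
  set p := h ^ (2 * (k : ℂ) + ν - 1)
  have e₁ : h ^ (2 * ((k + 1 : ℕ) : ℂ) + (ν - 1 - 1)) = p * h :=
    cpow_eq_cpow_mul_self hh (by push_cast; ring)
  have e₂ : h ^ (2 * ((k + 1 : ℕ) : ℂ) + (ν - 1 - 1 - 1)) = p := by congr 1; push_cast; ring
  have e₃ : h ^ (2 * (k : ℂ) + (ν + 1 - 1)) = p * h := cpow_eq_cpow_mul_self hh (by ring)
  have e₄ : h ^ (2 * (k : ℂ) + (ν + 1 - 1 - 1)) = p := by congr 1; ring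
  simp only [besselTerm, derivCoeff]
  rw [e₁, e₂, e₃, e₄, hxh]
  push_cast
  linear_combination (2 * (k : ℂ) + ν + 1) * p * h * hAB

theorem besselSeries_recurrence (hA : IsEntireCoeffs A) (hB : IsEntireCoeffs B)
    (hAB : ∀ k : ℕ, A (k + 1) * (k + 1) = -b * B k * (ν + k + 1)) (hx : 0 < x) :
    (2 - ν) * besselSeries (derivCoeff A (ν - 1)) (ν - 1 - 1) x +
        x * (besselSeries (derivCoeff (derivCoeff A (ν - 1)) (ν - 1 - 1)) (ν - 1 - 1 - 1) x +
          b * besselSeries (derivCoeff (derivCoeff B (ν + 1)) (ν + 1 - 1)) (ν + 1 - 1 - 1) x) =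
      -b * (ν + 2) * besselSeries (derivCoeff B (ν + 1)) (ν + 1 - 1) x := by
  have hA' := isEntireCoeffs_derivCoeff hA (ν - 1)
  have hA'' := isEntireCoeffs_derivCoeff hA' (ν - 1 - 1)
  have hB' := isEntireCoeffs_derivCoeff hB (ν + 1)
  have hB'' := isEntireCoeffs_derivCoeff hB' (ν + 1 - 1)
  have hlhs := ((hA'.summable_besselTerm (ν - 1 - 1) hx).hasSum.mul_left (2 - ν)).add
    ((hA''.summable_besselTerm (ν - 1 - 1 - 1) hx).hasSum.mul_left (x : ℂ))
  have hrhs := ((hB'.summable_besselTerm (ν + 1 - 1) hx).hasSum.mul_left (-b * (ν + 2))).sub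
    ((hB''.summable_besselTerm (ν + 1 - 1 - 1) hx).hasSum.mul_left ((x : ℂ) * b))
  rw [← hasSum_nat_add_iff' 1] at hlhs
  simp only [Finset.range_one, Finset.sum_singleton, besselTerm_recurrence_zero hx.ne', sub_zero,
    besselTerm_recurrence_succ hx.ne' (hAB _)] at hlhs
  unfold besselSeries
  linear_combination hlhs.unique hrhs

end Recurrence

theorem stmt11_general (b c ν ρ : ℂ) (hρ : 0 < ρ.re) (hν : 0 < ν.re)
    (x : ℝ) (hx : 0 < x) :
    (2 - ν) * deriv (fun y : ℝ => unifiedG b (c - 1) (ν - 1) ρ (y:ℂ)) x +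
        (x:ℂ) * (deriv (deriv (fun y : ℝ => unifiedG b (c - 1) (ν - 1) ρ (y:ℂ))) x +
          b * deriv (deriv (fun y : ℝ => unifiedG b (c - 1) (ν + 1) ρ (y:ℂ))) x) =
      -b * (ν + 2) * deriv (fun y : ℝ => unifiedG b (c - 1) (ν + 1) ρ (y:ℂ)) x := by
  have hA := isEntireCoeffs_besselCoeff b (c - 1) (ν - 1) hρ.le
  have hB := isEntireCoeffs_besselCoeff b (c - 1) (ν + 1) hρ.le
  have hν' (k : ℕ) : ν + k + 1 ≠ 0 := Complex.ne_zero_of_re_pos <| by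
    simp only [Complex.add_re, Complex.natCast_re, Complex.one_re]
    linarith [k.cast_nonneg (α := ℝ)]
  have hAB (k : ℕ) := besselCoeff_succ_mul b (c - 1) ρ (hν' k)
  simp only [unifiedG_ofReal_eq_besselSeries]
  rw [hA.deriv_besselSeries _ hx, hA.deriv_deriv_besselSeries _ hx,
    hB.deriv_besselSeries _ hx, hB.deriv_deriv_besselSeries _ hx]
  exact besselSeries_recurrence hA hB hAB hx

theorem stmt11 (b c ν ρ : ℂ) (hρ : 0 < ρ.re) (hc : 1 < c.re) (hν : 0 < ν.re)
    (x : ℝ) (hx : 0 < x) :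
    (2 - ν) * deriv (fun y : ℝ => unifiedG b (c - 1) (ν - 1) ρ (y:ℂ)) x +
        (x:ℂ) * (deriv (deriv (fun y : ℝ => unifiedG b (c - 1) (ν - 1) ρ (y:ℂ))) x +
          b * deriv (deriv (fun y : ℝ => unifiedG b (c - 1) (ν + 1) ρ (y:ℂ))) x) =
      -b * (ν + 2) * deriv (fun y : ℝ => unifiedG b (c - 1) (ν + 1) ρ (y:ℂ)) x :=
  stmt11_general b c ν ρ hρ hν x hx
end
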